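/- Let m, n ≥ 1 with m ≠ n and let Δ ⊂ ℝ^{m+n} be the root system of sl(m|n). For 0 ≤ m₀ ≤ m and 0 ≤ n₀ ≤ n set P(m₀|n₀) := L(m₀|n₀) ∪ N⁺(m₀|n₀), where L(m₀|n₀) := {ε_i − ε_j : i ≠ j and (i, j ≤ m₀ or i, j > m₀)} ∪ {δ_k − δ_l : k ≠ l and (k, l ≤ n₀ or k, l > n₀)} ∪ {±(ε_i − δ_l) : (i ≤ m₀ and l ≤ n₀) or (i > m₀ and l > n₀)}, and N⁺(m₀|n₀) := {ε_i − ε_j : i ≤ m₀ < j} ∪ {δ_k − δ_l : k ≤ n₀ < l} ∪ {ε_i − δ_l : i ≤ m₀, l > n₀} ∪ {δ_k − ε_j : k ≤ n₀, j > m₀}. Then a subset P ⊆ Δ is a cominuscule parabolic set of roots of Δ if and only if there exist σ ∈ S_m × S_n and a pair (m₀, n₀) with 0 ≤ m₀ ≤ m, 0 ≤ n₀ ≤ n, (m₀, n₀) ∉ {(0,0), (m,n)}, such that σ(P) = P(m₀|n₀); each such P(m₀|n₀) is itself a cominuscule parabolic set of roots, and for each cominuscule parabolic P the pair (m₀, n₀)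 with this property is unique. -/

import Mathlib

open Pointwise

/-- A proper subset `P` of a symmetric root set `Δ` is a parabolic set of roots if
`Δ = P ∪ (-P)` and `P` is closed under sums lying in `Δ`. -/
def IsParabolic {V : Type*} [AddCommGroup V] (Δ P : Set V) : Prop :=
  P ⊂ Δ ∧ Δ = P ∪ (-P) ∧ ∀ α ∈ P, ∀ β ∈ P, α + β ∈ Δ → α + β ∈ P

/-- A parabolic set of roots is cominuscule if the sum of any two elements of its
nilradical `N⁺ = P \ (-P)` is not a root. -/
def IsCominuscule {V : Type*} [AddCommGroup V] (Δ P : Set V) : Prop :=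
  IsParabolic Δ P ∧ ∀ α ∈ P \ (-P), ∀ β ∈ P \ (-P), α + β ∉ Δ

namespace SL

variable {m n : ℕ}

/-- `ℝ^{m+n}`, with coordinates indexed by `Fin m ⊕ Fin n`. -/
abbrev V (m n : ℕ) := (Fin m ⊕ Fin n) → ℝ

noncomputable def ε (i : Fin m) : V m n := Pi.single (Sum.inl i) 1

noncomputable def δ (k : Fin n) : V m n := Pi.single (Sum.inr k) 1

/-- The root system of `sl(m|n)`. -/
noncomputable def Δroot (m n : ℕ) : Set (V m n) :=
  {v | ∃ i j : Fin m, i ≠ j ∧ v = ε i - ε j} ∪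
  {v | ∃ k l : Fin n, k ≠ l ∧ v = δ k - δ l} ∪
  {v | ∃ (i : Fin m) (l : Fin n), v = ε i - δ l ∨ v = δ l - ε i}

/-- The Levi component `L(m₀|n₀)`  (1-based `i ≤ m₀` becomes 0-based `(i:ℕ) < m₀`). -/
noncomputable def L (m n m₀ n₀ : ℕ) : Set (V m n) :=
  {v | ∃ i j : Fin m, i ≠ j ∧
      (((i : ℕ) < m₀ ∧ (j : ℕ) < m₀) ∨ (m₀ ≤ (i : ℕ) ∧ m₀ ≤ (j : ℕ))) ∧ v = ε i - ε j} ∪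
  {v | ∃ k l : Fin n, k ≠ l ∧
      (((k : ℕ) < n₀ ∧ (l : ℕ) < n₀) ∨ (n₀ ≤ (k : ℕ) ∧ n₀ ≤ (l : ℕ))) ∧ v = δ k - δ l} ∪
  {v | ∃ (i : Fin m) (l : Fin n),
      (((i : ℕ) < m₀ ∧ (l : ℕ) < n₀) ∨ (m₀ ≤ (i : ℕ) ∧ n₀ ≤ (l : ℕ))) ∧
      (v = ε i - δ l ∨ v = δ l - ε i)}

/-- The nilradical `N⁺(m₀|n₀)`. -/
noncomputable def Nplus (m n m₀ n₀ : ℕ) : Set (V m n) :=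
  {v | ∃ i j : Fin m, (i : ℕ) < m₀ ∧ m₀ ≤ (j : ℕ) ∧ v = ε i - ε j} ∪
  {v | ∃ k l : Fin n, (k : ℕ) < n₀ ∧ n₀ ≤ (l : ℕ) ∧ v = δ k - δ l} ∪
  {v | ∃ (i : Fin m) (l : Fin n), (i : ℕ) < m₀ ∧ n₀ ≤ (l : ℕ) ∧ v = ε i - δ l} ∪
  {v | ∃ (i : Fin m) (l : Fin n), (l : ℕ) < n₀ ∧ m₀ ≤ (i : ℕ) ∧ v = δ l - ε i}

/-- `P(m₀|n₀) = L(m₀|n₀) ⊔ N⁺(m₀|n₀)`. -/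
noncomputable def P (m n m₀ n₀ : ℕ) : Set (V m n) := L m n m₀ n₀ ∪ Nplus m n m₀ n₀

/-- The action of `(σ, τ) ∈ S_m × S_n` on `ℝ^{m+n}`, permuting the `ε`'s and `δ`'s. -/
def act (σ : Equiv.Perm (Fin m)) (τ : Equiv.Perm (Fin n)) : V m n → V m n :=
  fun v => v ∘ (Equiv.sumCongr σ τ).symm

end SL

/-!
As a set of vectors, the root system of `sl(m|n)` is the type-`A` root system
`{e_x - e_y : x ≠ y}` on the index set `X = Fin m ⊕ Fin n`; parities play no role in the notions
of parabolic and cominuscule sets. For `T ⊆ X` let `φ_T` be the sum of the coordinates in `T`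
and `P_T = {α : φ_T α ≥ 0}`. When `∅ ≠ T ≠ X`, `P_T` is parabolic because `φ_T` is additive, and
cominuscule because `φ_T` is `1` on its nilradical but at most `1` on every root. Conversely a
parabolic `P` orders `X` by `x ≥ y ↔ e_x - e_y ∈ P`, and being cominuscule says that this total
preorder has exactly two levels; `P = P_T` for the top level `T`, which is recovered from `P` as
the set of sources `x` of the roots `e_x - e_y` of the nilradical. Finally `P(m₀|n₀) = P_T` for
`T` the first `m₀` indices of `Fin m` and the first `n₀` of `Fin n`, every `T` is moved to such a
set by `S_m × S_n`, and the block sizes `(|T ∩ Fin m|, |T ∩ Fin n|)` are invariant.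
-/

theorem Equiv.Perm.exists_image_eq_of_ncard_eq {α : Type*} [Finite α] {s t : Set α}
    (h : s.ncard = t.ncard) : ∃ σ : Equiv.Perm α, σ '' s = t := by
  have := Fintype.ofFinite α
  classical
  obtain ⟨σ, hσ⟩ := Equiv.Perm.exists_map_finset_eq s.toFinset t.toFinset
    (by simpa [Set.ncard_eq_toFinset_card'] using h)
  exact ⟨σ, by simpa using congrArg (fun u : Finset α => (u : Set α)) hσ⟩

namespace TypeA

section

variable {X Y : Type*} [DecidableEq X] [DecidableEq Y]

noncomputable def root (x y : X) : X → ℝ := Pi.single x 1 - Pi.single y 1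

variable (X) in
def roots : Set (X → ℝ) := {v | ∃ x y, x ≠ y ∧ root x y = v}

lemma root_add_root (x y z : X) : root x y + root y z = root x z := sub_add_sub_cancel _ _ _

lemma neg_root (x y : X) : -root x y = root y x := neg_sub _ _

lemma root_comp_equiv (g : Y ≃ X) (x y : X) : root x y ∘ g = root (g.symm x) (g.symm y) := by
  simp only [root, Pi.sub_comp, Pi.single_comp_equiv]

lemma root_mem_roots {x y : X} (hxy : x ≠ y) : root x y ∈ roots X := ⟨x, y, hxy, rfl⟩

lemma neg_mem_roots_iff {v : X → ℝ} : -v ∈ roots X ↔ v ∈ roots X := by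
  suffices ∀ v : X → ℝ, v ∈ roots X → -v ∈ roots X from ⟨fun h => neg_neg v ▸ this _ h, this v⟩
  rintro _ ⟨x, y, hxy, rfl⟩
  rw [neg_root]
  exact root_mem_roots hxy.symm

lemma comp_mem_roots_iff (g : Y ≃ X) {v : X → ℝ} : v ∘ g ∈ roots Y ↔ v ∈ roots X := by
  constructor
  · rintro ⟨x, y, hxy, hv⟩
    have : v = root x y ∘ g.symm := by rw [hv, Function.comp_assoc, g.self_comp_symm]; rfl
    rw [this, root_comp_equiv, Equiv.symm_symm]
    exact root_mem_roots (g.injective.ne hxy)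
  · rintro ⟨x, y, hxy, rfl⟩
    rw [root_comp_equiv]
    exact root_mem_roots (g.symm.injective.ne hxy)

lemma root_mem_neg_iff {P : Set (X → ℝ)} {x y : X} : root x y ∈ -P ↔ root y x ∈ P := by
  rw [Set.mem_neg, neg_root]

lemma root_mem_diff_neg_iff {P : Set (X → ℝ)} {x y : X} :
    root x y ∈ P \ -P ↔ root x y ∈ P ∧ root y x ∉ P := by
  rw [Set.mem_sdiff, root_mem_neg_iff]

def nilSources (P : Set (X → ℝ)) : Set X := {x | ∃ y, root x y ∈ P \ -P}

end

section

variable {X Y : Type*} [Fintype X] [Fintype Y]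

noncomputable def grading (T : Set X) : (X → ℝ) →ₗ[ℝ] ℝ where
  toFun v := ∑ x, T.indicator 1 x * v x
  map_add' v w := by simp [mul_add, Finset.sum_add_distrib]
  map_smul' c v := by simp [Finset.mul_sum, mul_left_comm]

lemma grading_comp_equiv (g : Y ≃ X) (T : Set Y) (v : X → ℝ) :
    grading T (v ∘ g) = grading (g '' T) v := by
  change ∑ y, T.indicator 1 y * v (g y) = ∑ x, (g '' T).indicator 1 x * v x
  rw [← g.sum_comp]
  congr 1
  ext y
  by_cases hy : y ∈ T <;> simp [hy]

end

variable {X Y : Type*} [DecidableEq X] [DecidableEq Y] [Fintype X] [Fintype Y]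

lemma grading_single (T : Set X) (x : X) : grading T (Pi.single x 1) = T.indicator 1 x := by
  change ∑ z, T.indicator 1 z * Pi.single x 1 z = _
  simp [Pi.single_apply]

lemma grading_root (T : Set X) (x y : X) :
    grading T (root x y) = T.indicator 1 x - T.indicator 1 y := by
  rw [root, map_sub, grading_single, grading_single]

lemma grading_root_nonneg_iff {T : Set X} {x y : X} :
    0 ≤ grading T (root x y) ↔ x ∈ T ∨ y ∉ T := by
  by_cases hx : x ∈ T <;> by_cases hy : y ∈ T <;> simp [grading_root, hx, hy]

lemma grading_root_pos_iff {T : Set X} {x y : X} :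
    0 < grading T (root x y) ↔ x ∈ T ∧ y ∉ T := by
  by_cases hx : x ∈ T <;> by_cases hy : y ∈ T <;> simp [grading_root, hx, hy]

lemma grading_le_one {T : Set X} {v : X → ℝ} (hv : v ∈ roots X) : grading T v ≤ 1 := by
  obtain ⟨x, y, -, rfl⟩ := hv
  by_cases hx : x ∈ T <;> by_cases hy : y ∈ T <;> simp [grading_root, hx, hy]

lemma one_le_grading_of_pos {T : Set X} {v : X → ℝ} (hv : v ∈ roots X)
    (hpos : 0 < grading T v) : 1 ≤ grading T v := by
  obtain ⟨x, y, -, rfl⟩ := hv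
  revert hpos
  by_cases hx : x ∈ T <;> by_cases hy : y ∈ T <;> norm_num [grading_root, hx, hy]

def parabolicOf (T : Set X) : Set (X → ℝ) := {v | v ∈ roots X ∧ 0 ≤ grading T v}

lemma root_mem_parabolicOf_iff {T : Set X} {x y : X} (hxy : x ≠ y) :
    root x y ∈ parabolicOf T ↔ x ∈ T ∨ y ∉ T := by
  simp only [parabolicOf, Set.mem_ofPred_eq, root_mem_roots hxy, true_and, grading_root_nonneg_iff]

lemma mem_neg_parabolicOf_iff {T : Set X} {v : X → ℝ} :
    v ∈ -parabolicOf T ↔ v ∈ roots X ∧ grading T v ≤ 0 := by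
  simp only [Set.mem_neg, parabolicOf, Set.mem_ofPred_eq, neg_mem_roots_iff, map_neg,
    neg_nonneg]

lemma mem_parabolicOf_diff_neg_iff {T : Set X} {v : X → ℝ} :
    v ∈ parabolicOf T \ -parabolicOf T ↔ v ∈ roots X ∧ 0 < grading T v := by
  rw [Set.mem_sdiff, mem_neg_parabolicOf_iff]
  constructor
  · rintro ⟨⟨hv, -⟩, hneg⟩
    exact ⟨hv, lt_of_not_ge fun h => hneg ⟨hv, h⟩⟩
  · rintro ⟨hv, hpos⟩
    exact ⟨⟨hv, hpos.le⟩, fun h => hpos.not_ge h.2⟩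

theorem isCominuscule_parabolicOf {T : Set X} (hT : T.Nonempty) (hTc : Tᶜ.Nonempty) :
    IsCominuscule (roots X) (parabolicOf T) := by
  obtain ⟨a, ha⟩ := hT
  obtain ⟨b, hb⟩ := hTc
  have hba : b ≠ a := ne_of_mem_of_not_mem ha hb |>.symm
  refine ⟨⟨⟨fun v hv => hv.1, fun hsub => ?_⟩, ?_, ?_⟩, ?_⟩
  · have := (root_mem_parabolicOf_iff hba).1 (hsub (root_mem_roots hba))
    tauto
  · ext v
    rw [Set.mem_union, mem_neg_parabolicOf_iff]
    exact ⟨fun hv => (le_total 0 (grading T v)).imp (⟨hv, ·⟩) (⟨hv, ·⟩),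
      fun h => h.elim (·.1) (·.1)⟩
  · rintro α ⟨-, hα⟩ β ⟨-, hβ⟩ hαβ
    exact ⟨hαβ, by rw [map_add]; positivity⟩
  · intro α hα β hβ hαβ
    rw [mem_parabolicOf_diff_neg_iff] at hα hβ
    have := grading_le_one (T := T) hαβ
    rw [map_add] at this
    linarith [one_le_grading_of_pos hα.1 hα.2, one_le_grading_of_pos hβ.1 hβ.2]

theorem image_parabolicOf (g : Y ≃ X) (T : Set Y) :
    (fun v => v ∘ g.symm) '' parabolicOf T = parabolicOf (g '' T) := by
  rw [Set.image_eq_preimage_of_inverse (g := fun v => v ∘ g)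
    (fun v => by simp [Function.comp_assoc]) (fun v => by simp [Function.comp_assoc])]
  ext v
  simp only [Set.mem_preimage, parabolicOf, Set.mem_ofPred_eq, comp_mem_roots_iff,
    grading_comp_equiv]

theorem eq_parabolicOf_of_image_eq {P : Set (Y → ℝ)} {S : Set X} (g : Y ≃ X)
    (h : (fun v => v ∘ g.symm) '' P = parabolicOf S) : P = parabolicOf (g.symm '' S) := by
  rw [← image_parabolicOf, ← h, Set.image_image]
  simp [Function.comp_assoc]

theorem nilSources_parabolicOf {T : Set X} (hTc : Tᶜ.Nonempty) :
    nilSources (parabolicOf T) = T := by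
  ext x
  simp only [nilSources, Set.mem_ofPred_eq, mem_parabolicOf_diff_neg_iff, grading_root_pos_iff]
  refine ⟨fun ⟨_, _, hx, _⟩ => hx, fun hx => ?_⟩
  obtain ⟨y, hy⟩ := hTc
  exact ⟨y, root_mem_roots (ne_of_mem_of_not_mem hx hy), hx, hy⟩

end TypeA

open TypeA

section

variable {X : Type*} [DecidableEq X] {P : Set (X → ℝ)} {x y z : X}

theorem IsParabolic.root_mem_or (hP : IsParabolic (roots X) P) (hxy : x ≠ y) :
    root x y ∈ P ∨ root y x ∈ P := by
  have := root_mem_roots hxy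
  rwa [hP.2.1, Set.mem_union, root_mem_neg_iff] at this

theorem IsParabolic.root_mem_trans (hP : IsParabolic (roots X) P) (hxz : x ≠ z)
    (hxy : root x y ∈ P) (hyz : root y z ∈ P) : root x z ∈ P := by
  have := hP.2.2 _ hxy _ hyz
  rw [root_add_root] at this
  exact this (root_mem_roots hxz)

theorem IsCominuscule.not_chain (hP : IsCominuscule (roots X) P) (hxy : root x y ∈ P \ -P) :
    root y z ∉ P \ -P := by
  intro hyz
  by_cases hxz : x = z
  · subst hxz
    exact hxy.2 (root_mem_neg_iff.2 hyz.1)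
  · exact hP.2 _ hxy _ hyz (root_add_root x y z ▸ root_mem_roots hxz)

theorem IsCominuscule.root_mem_iff (hP : IsCominuscule (roots X) P) (hxy : x ≠ y) :
    root x y ∈ P ↔ x ∈ nilSources P ∨ y ∉ nilSources P := by
  constructor
  · intro h
    refine or_iff_not_imp_right.2 fun hy => ?_
    obtain ⟨z, hz⟩ := not_not.1 hy
    rw [root_mem_diff_neg_iff] at hz
    have hxz : x ≠ z := by rintro rfl; exact hz.2 h
    have hzy : z ≠ y := by rintro rfl; exact hz.2 hz.1
    exact ⟨z, root_mem_diff_neg_iff.2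
      ⟨hP.1.root_mem_trans hxz h hz.1, fun hzx => hz.2 (hP.1.root_mem_trans hzy hzx h)⟩⟩
  · intro hsrc
    by_contra h
    have hyx : root y x ∈ P \ -P :=
      root_mem_diff_neg_iff.2 ⟨(hP.1.root_mem_or hxy).resolve_left h, h⟩
    rcases hsrc with ⟨z, hz⟩ | hy
    · exact hP.not_chain hyx hz
    · exact hy ⟨x, hyx⟩

theorem IsCominuscule.nilSources_nonempty (hP : IsCominuscule (roots X) P) :
    (nilSources P).Nonempty ∧ (nilSources P)ᶜ.Nonempty := by
  obtain ⟨v, ⟨x, y, hxy, rfl⟩, hvP⟩ := Set.exists_of_ssubset hP.1.1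
  rw [hP.root_mem_iff hxy, not_or, not_not] at hvP
  exact ⟨⟨y, hvP.2⟩, ⟨x, hvP.1⟩⟩

variable [Fintype X]

theorem IsCominuscule.eq_parabolicOf (hP : IsCominuscule (roots X) P) :
    P = parabolicOf (nilSources P) := by
  ext v
  constructor
  · intro hv
    obtain ⟨x, y, hxy, rfl⟩ := hP.1.1.subset hv
    exact (root_mem_parabolicOf_iff hxy).2 ((hP.root_mem_iff hxy).1 hv)
  · intro hv
    obtain ⟨x, y, hxy, rfl⟩ := hv.1
    exact (hP.root_mem_iff hxy).2 ((root_mem_parabolicOf_iff hxy).1 hv)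

theorem TypeA.isCominuscule_iff :
    IsCominuscule (roots X) P ↔ ∃ T : Set X, T.Nonempty ∧ Tᶜ.Nonempty ∧ P = parabolicOf T := by
  refine ⟨fun hP => ⟨_, hP.nilSources_nonempty.1, hP.nilSources_nonempty.2, hP.eq_parabolicOf⟩, ?_⟩
  rintro ⟨T, hT, hTc, rfl⟩
  exact isCominuscule_parabolicOf hT hTc

end

namespace SL

variable {m n : ℕ}

lemma Δroot_eq_roots (m n : ℕ) : Δroot m n = roots (Fin m ⊕ Fin n) := by
  ext v
  constructor
  · rintro ((⟨i, j, hij, rfl⟩ | ⟨k, l, hkl, rfl⟩) | ⟨i, l, rfl | rfl⟩)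
    · exact root_mem_roots (Sum.inl_injective.ne hij)
    · exact root_mem_roots (Sum.inr_injective.ne hkl)
    · exact root_mem_roots Sum.inl_ne_inr
    · exact root_mem_roots Sum.inr_ne_inl
  · rintro ⟨i | k, j | l, hxy, rfl⟩
    · exact .inl (.inl ⟨i, j, fun h => hxy (congrArg _ h), rfl⟩)
    · exact .inr ⟨i, l, .inl rfl⟩
    · exact .inr ⟨j, k, .inr rfl⟩
    · exact .inl (.inr ⟨k, l, fun h => hxy (congrArg _ h), rfl⟩)

def initialSegments (m₀ n₀ : ℕ) : Set (Fin m ⊕ Fin n) :=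
  Sum.elim (fun i => (i : ℕ) < m₀) (fun l => (l : ℕ) < n₀)

@[simp] lemma inl_mem_initialSegments {m₀ n₀ : ℕ} {i : Fin m} :
    Sum.inl i ∈ (initialSegments m₀ n₀ : Set (Fin m ⊕ Fin n)) ↔ (i : ℕ) < m₀ := Iff.rfl

@[simp] lemma inr_mem_initialSegments {m₀ n₀ : ℕ} {l : Fin n} :
    Sum.inr l ∈ (initialSegments m₀ n₀ : Set (Fin m ⊕ Fin n)) ↔ (l : ℕ) < n₀ := Iff.rfl

lemma P_subset_parabolicOf (m₀ n₀ : ℕ) : P m n m₀ n₀ ⊆ parabolicOf (initialSegments m₀ n₀) := by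
  rintro v (((⟨i, j, hij, hc, rfl⟩ | ⟨k, l, hkl, hc, rfl⟩) | ⟨i, l, hc, rfl | rfl⟩) |
      (((⟨i, j, h₁, h₂, rfl⟩ | ⟨k, l, h₁, h₂, rfl⟩) | ⟨i, l, h₁, h₂, rfl⟩) | ⟨i, l, h₁, h₂, rfl⟩))
  all_goals
    refine (root_mem_parabolicOf_iff ?_).2 ?_
    all_goals simp only [ne_eq, Sum.inl.injEq, Sum.inr.injEq, reduceCtorEq, not_false_eq_true,
      inl_mem_initialSegments, inr_mem_initialSegments, ← Fin.val_inj] at *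
    all_goals omega

lemma parabolicOf_subset_P (m₀ n₀ : ℕ) : parabolicOf (initialSegments m₀ n₀) ⊆ P m n m₀ n₀ := by
  intro v hv
  have hroot := hv.1
  rw [← Δroot_eq_roots] at hroot
  rcases hroot with ((⟨i, j, hij, rfl⟩ | ⟨k, l, hkl, rfl⟩) | ⟨i, l, rfl | rfl⟩)
  · have h := (root_mem_parabolicOf_iff (Sum.inl_injective.ne hij)).1 hv
    simp only [inl_mem_initialSegments] at h
    by_cases h₁ : (i : ℕ) < m₀ <;> by_cases h₂ : (j : ℕ) < m₀ <;>
    first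
    | (refine .inl (.inl (.inl ⟨i, j, hij, ?_, rfl⟩)); omega)
    | (refine .inr (.inl (.inl (.inl ⟨i, j, ?_, ?_, rfl⟩))) <;> omega)
  · have h := (root_mem_parabolicOf_iff (Sum.inr_injective.ne hkl)).1 hv
    simp only [inr_mem_initialSegments] at h
    by_cases h₁ : (k : ℕ) < n₀ <;> by_cases h₂ : (l : ℕ) < n₀ <;>
    first
    | (refine .inl (.inl (.inr ⟨k, l, hkl, ?_, rfl⟩)); omega)
    | (refine .inr (.inl (.inl (.inr ⟨k, l, ?_, ?_, rfl⟩))) <;> omega)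
  · have h := (root_mem_parabolicOf_iff Sum.inl_ne_inr).1 hv
    simp only [inl_mem_initialSegments, inr_mem_initialSegments] at h
    by_cases h₁ : (i : ℕ) < m₀ <;> by_cases h₂ : (l : ℕ) < n₀ <;>
    first
    | (refine .inl (.inr ⟨i, l, ?_, .inl rfl⟩); omega)
    | (refine .inr (.inl (.inr ⟨i, l, ?_, ?_, rfl⟩)) <;> omega)
  · have h := (root_mem_parabolicOf_iff Sum.inr_ne_inl).1 hv
    simp only [inl_mem_initialSegments, inr_mem_initialSegments] at h
    by_cases h₁ : (i : ℕ) < m₀ <;> by_cases h₂ : (l : ℕ) < n₀ <;>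
    first
    | (refine .inl (.inr ⟨i, l, ?_, .inr rfl⟩); omega)
    | (refine .inr (.inr ⟨i, l, ?_, ?_, rfl⟩) <;> omega)

lemma P_eq_parabolicOf (m₀ n₀ : ℕ) : P m n m₀ n₀ = parabolicOf (initialSegments m₀ n₀) :=
  (P_subset_parabolicOf m₀ n₀).antisymm (parabolicOf_subset_P m₀ n₀)

lemma initialSegments_nonempty_iff {m₀ n₀ : ℕ} (hm₀ : m₀ ≤ m) (hn₀ : n₀ ≤ n) :
    (initialSegments m₀ n₀ : Set (Fin m ⊕ Fin n)).Nonempty ↔ (m₀, n₀) ≠ (0, 0) := by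
  rw [ne_eq, Prod.mk.injEq, not_and_or]
  constructor
  · rintro ⟨i | l, h⟩
    · exact .inl (by simp at h; omega)
    · exact .inr (by simp at h; omega)
  · rintro (h | h)
    · exact ⟨.inl ⟨0, by omega⟩, by simp; omega⟩
    · exact ⟨.inr ⟨0, by omega⟩, by simp; omega⟩

lemma compl_initialSegments_nonempty_iff {m₀ n₀ : ℕ} (hm₀ : m₀ ≤ m) (hn₀ : n₀ ≤ n) :
    (initialSegments m₀ n₀ : Set (Fin m ⊕ Fin n))ᶜ.Nonempty ↔ (m₀, n₀) ≠ (m, n) := by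
  rw [ne_eq, Prod.mk.injEq, not_and_or]
  constructor
  · rintro ⟨i | l, h⟩
    · exact .inl (by simp at h; omega)
    · exact .inr (by simp at h; omega)
  · rintro (h | h)
    · exact ⟨.inl ⟨m₀, by omega⟩, by simp⟩
    · exact ⟨.inr ⟨n₀, by omega⟩, by simp⟩

lemma preimage_inl_image_sumCongr (σ : Equiv.Perm (Fin m)) (τ : Equiv.Perm (Fin n))
    (T : Set (Fin m ⊕ Fin n)) :
    Sum.inl ⁻¹' (Equiv.sumCongr σ τ '' T) = σ '' (Sum.inl ⁻¹' T) := by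
  ext i
  rw [Set.mem_preimage, Set.mem_image_equiv, Set.mem_image_equiv, Equiv.sumCongr_symm]
  rfl

lemma preimage_inr_image_sumCongr (σ : Equiv.Perm (Fin m)) (τ : Equiv.Perm (Fin n))
    (T : Set (Fin m ⊕ Fin n)) :
    Sum.inr ⁻¹' (Equiv.sumCongr σ τ '' T) = τ '' (Sum.inr ⁻¹' T) := by
  ext l
  rw [Set.mem_preimage, Set.mem_image_equiv, Set.mem_image_equiv, Equiv.sumCongr_symm]
  rfl

noncomputable def blockCard (T : Set (Fin m ⊕ Fin n)) : ℕ × ℕ :=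
  ((Sum.inl ⁻¹' T).ncard, (Sum.inr ⁻¹' T).ncard)

lemma blockCard_image_sumCongr (σ : Equiv.Perm (Fin m)) (τ : Equiv.Perm (Fin n))
    (T : Set (Fin m ⊕ Fin n)) : blockCard (Equiv.sumCongr σ τ '' T) = blockCard T := by
  simp only [blockCard, preimage_inl_image_sumCongr, preimage_inr_image_sumCongr,
    Set.ncard_image_of_injective _ (Equiv.injective _)]

lemma ncard_setOf_val_lt {k : ℕ} (h : k ≤ m) : {i : Fin m | (i : ℕ) < k}.ncard = k := by
  rw [← Nat.card_coe_set_eq, Nat.card_eq_fintype_card]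
  exact Fintype.card_fin_lt_of_le h

lemma blockCard_initialSegments {m₀ n₀ : ℕ} (hm₀ : m₀ ≤ m) (hn₀ : n₀ ≤ n) :
    blockCard (initialSegments m₀ n₀ : Set (Fin m ⊕ Fin n)) = (m₀, n₀) :=
  Prod.ext (ncard_setOf_val_lt hm₀) (ncard_setOf_val_lt hn₀)

lemma exists_sumCongr_image_eq_initialSegments (T : Set (Fin m ⊕ Fin n)) :
    ∃ (σ : Equiv.Perm (Fin m)) (τ : Equiv.Perm (Fin n)) (m₀ n₀ : ℕ), m₀ ≤ m ∧ n₀ ≤ n ∧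
      Equiv.sumCongr σ τ '' T = initialSegments m₀ n₀ := by
  have hm₀ : (Sum.inl ⁻¹' T).ncard ≤ m := by simpa using Set.ncard_le_card (Sum.inl ⁻¹' T)
  have hn₀ : (Sum.inr ⁻¹' T).ncard ≤ n := by simpa using Set.ncard_le_card (Sum.inr ⁻¹' T)
  obtain ⟨σ, hσ⟩ := Equiv.Perm.exists_image_eq_of_ncard_eq (ncard_setOf_val_lt hm₀).symm
  obtain ⟨τ, hτ⟩ := Equiv.Perm.exists_image_eq_of_ncard_eq (ncard_setOf_val_lt hn₀).symm
  refine ⟨σ, τ, _, _, hm₀, hn₀, ?_⟩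
  ext (i | l)
  · exact Set.ext_iff.1 ((preimage_inl_image_sumCongr σ τ T).trans hσ) i
  · exact Set.ext_iff.1 ((preimage_inr_image_sumCongr σ τ T).trans hτ) l

lemma blockCard_nilSources_of_act_image_eq {P : Set (V m n)} {σ : Equiv.Perm (Fin m)}
    {τ : Equiv.Perm (Fin n)} {m₀ n₀ : ℕ} (hm₀ : m₀ ≤ m) (hn₀ : n₀ ≤ n) (htop : (m₀, n₀) ≠ (m, n))
    (h : act σ τ '' P = parabolicOf (initialSegments m₀ n₀)) :
    blockCard (nilSources P) = (m₀, n₀) := by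
  rw [eq_parabolicOf_of_image_eq _ h, nilSources_parabolicOf, Equiv.sumCongr_symm,
    blockCard_image_sumCongr, blockCard_initialSegments hm₀ hn₀]
  rw [← Equiv.image_compl]
  exact ((compl_initialSegments_nonempty_iff hm₀ hn₀).2 htop).image _

end SL

theorem stmt_2 (m n : ℕ)
    (P : Set (SL.V m n)) :
    (IsCominuscule (SL.Δroot m n) P ↔
      ∃ (σ : Equiv.Perm (Fin m)) (τ : Equiv.Perm (Fin n)) (m₀ n₀ : ℕ),
        m₀ ≤ m ∧ n₀ ≤ n ∧ (m₀, n₀) ≠ (0, 0) ∧ (m₀, n₀) ≠ (m, n) ∧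
        SL.act σ τ '' P = SL.P m n m₀ n₀) ∧
    (∀ m₀ n₀ : ℕ, m₀ ≤ m → n₀ ≤ n → (m₀, n₀) ≠ (0, 0) → (m₀, n₀) ≠ (m, n) →
      IsCominuscule (SL.Δroot m n) (SL.P m n m₀ n₀)) ∧
    (IsCominuscule (SL.Δroot m n) P →
      ∀ (m₀ n₀ m₀' n₀' : ℕ) (σ σ' : Equiv.Perm (Fin m)) (τ τ' : Equiv.Perm (Fin n)),
        m₀ ≤ m → n₀ ≤ n → (m₀, n₀) ≠ (0, 0) → (m₀, n₀) ≠ (m, n) →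
        m₀' ≤ m → n₀' ≤ n → (m₀', n₀') ≠ (0, 0) → (m₀', n₀') ≠ (m, n) →
        SL.act σ τ '' P = SL.P m n m₀ n₀ → SL.act σ' τ' '' P = SL.P m n m₀' n₀' →
        m₀ = m₀' ∧ n₀ = n₀') := by
  simp only [SL.Δroot_eq_roots, SL.P_eq_parabolicOf]
  refine ⟨⟨fun hP => ?_, ?_⟩, ?_, ?_⟩
  · obtain ⟨T, hT, hTc, rfl⟩ := TypeA.isCominuscule_iff.1 hP
    obtain ⟨σ, τ, m₀, n₀, hm₀, hn₀, hσ⟩ := SL.exists_sumCongr_image_eq_initialSegments T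
    refine ⟨σ, τ, m₀, n₀, hm₀, hn₀, ?_, ?_, hσ ▸ image_parabolicOf _ T⟩
    · rw [← SL.initialSegments_nonempty_iff hm₀ hn₀, ← hσ]
      exact hT.image _
    · rw [← SL.compl_initialSegments_nonempty_iff hm₀ hn₀, ← hσ, ← Equiv.image_compl]
      exact hTc.image _
  · rintro ⟨σ, τ, m₀, n₀, hm₀, hn₀, h0, htop, hσ⟩
    refine TypeA.isCominuscule_iff.2 ⟨_, ?_, ?_, eq_parabolicOf_of_image_eq _ hσ⟩
    · exact ((SL.initialSegments_nonempty_iff hm₀ hn₀).2 h0).image _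
    · rw [← Equiv.image_compl]
      exact ((SL.compl_initialSegments_nonempty_iff hm₀ hn₀).2 htop).image _
  · intro m₀ n₀ hm₀ hn₀ h0 htop
    exact isCominuscule_parabolicOf ((SL.initialSegments_nonempty_iff hm₀ hn₀).2 h0)
      ((SL.compl_initialSegments_nonempty_iff hm₀ hn₀).2 htop)
  · intro _ m₀ n₀ m₀' n₀' σ σ' τ τ' hm₀ hn₀ _ htop hm₀' hn₀' _ htop' hσ hσ'
    exact Prod.mk.inj <| (SL.blockCard_nilSources_of_act_image_eq hm₀ hn₀ htop hσ).symm.trans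
      (SL.blockCard_nilSources_of_act_image_eq hm₀' hn₀' htop' hσ')
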